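/- arXiv:math/0411369 — 4 statements merged into one kernel-verified Lean document; each statement's English description precedes it below -/
import Mathlib

section
/- Let G be a finite group acting on a finite set, let J be the set of conjugacy classes of G, and for a conjugacy class ⟨g⟩ let λ_{⟨g⟩} denote the number of fixed points of any element of ⟨g⟩. Define c_{⟨g⟩} = |⟨g⟩|/|G| and c'_{⟨g⟩} = (|⟨g⟩|/|G|)·λ_{⟨g⟩}. If the action is transitive and the set is nonempty, then Σ_{⟨g⟩∈J} c'_{⟨g⟩} = 1 (Cauchy–Frobenius), and consequently I_c(c') := 1 − Σ_j c'_j + Σ_{j: c'_j≠0} c'_j · log(c'_j/c_j) equals (1/|G|) · Σ_{g∈G, λ_g≠0} λ_g · log λ_g. -/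
open Finset

/-!
Since `λ` is a class function, grouping a sum over `G` by conjugacy classes turns
`∑ⱼ |j| f(λⱼ)` into `∑_g f(λ_g)`. For `f = id`, Burnside's lemma for a transitive action gives
`∑_g λ_g = |G|`, i.e. `∑ⱼ c'ⱼ = 1`. Since `c'ⱼ / cⱼ = λⱼ`, the entropy term is the same regrouped
sum for `f(n) = n log n`; the terms omitted on either side vanish because `Real.log 0 = 0`.
-/

theorem ConjClasses.sum_card_carrier_smul {G M : Type*} [Group G] [Fintype G]
    [Fintype (ConjClasses G)] [AddCommMonoid M] (f : ConjClasses G → M) :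
    ∑ j, Nat.card j.carrier • f j = ∑ g : G, f (ConjClasses.mk g) := by
  classical
  rw [← sum_fiberwise univ ConjClasses.mk fun g => f (ConjClasses.mk g)]
  refine sum_congr rfl fun j _ => ?_
  rw [sum_congr rfl fun g hg => by rw [(mem_filter.mp hg).2], sum_const,
    Nat.card_eq_card_toFinset]
  congr 2
  ext g
  simp [ConjClasses.mem_carrier_iff_mk_eq]

theorem ConjClasses.card_carrier_pos {G : Type*} [Group G] [Finite G] (j : ConjClasses G) :
    0 < Nat.card j.carrier := by
  obtain ⟨g, rfl⟩ := j.exists_rep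
  exact Nat.card_pos_iff.mpr ⟨⟨⟨g, ConjClasses.mem_carrier_mk⟩⟩, inferInstance⟩

theorem MulAction.sum_card_fixedPoints_eq_card_of_isPretransitive {G X : Type*} [Group G]
    [MulAction G X] [Fintype G] [Fintype X] [DecidableEq X] [Nonempty X] [IsPretransitive G X] :
    ∑ g : G, #{x : X | g • x = x} = Fintype.card G := by
  obtain ⟨_⟩ := (pretransitive_iff_unique_quotient_of_nonempty G X).mp ‹_›
  simpa [Fintype.card_subtype] using sum_card_fixedBy_eq_card_orbits_mul_card_group G X

open scoped Classical in
theorem cauchy_frobenius_entropy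
    {G : Type*} [Group G] [Fintype G] [Fintype (ConjClasses G)]
    {X : Type*} [Fintype X] [Nonempty X] [DecidableEq X] [MulAction G X]
    (htrans : MulAction.IsPretransitive G X)
    (lam : ConjClasses G → ℕ)
    (hlam : ∀ g : G, lam (ConjClasses.mk g)
      = (Finset.univ.filter (fun x : X => g • x = x)).card)
    (c c' : ConjClasses G → ℝ)
    (hc : ∀ j, c j = (Nat.card j.carrier : ℝ) / (Fintype.card G : ℝ))
    (hc' : ∀ j, c' j = c j * lam j) :
    ∑ j, c' j = 1 ∧
    1 - ∑ j, c' j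
      + ∑ j ∈ Finset.univ.filter (fun j => c' j ≠ 0), c' j * Real.log (c' j / c j)
      = (1 / (Fintype.card G : ℝ)) *
          ∑ g ∈ Finset.univ.filter
              (fun g : G => (Finset.univ.filter (fun x : X => g • x = x)).card ≠ 0),
            ((Finset.univ.filter (fun x : X => g • x = x)).card : ℝ) *
              Real.log ((Finset.univ.filter (fun x : X => g • x = x)).card) := by
  have average (φ : ℕ → ℝ) :
      ∑ j, c j * φ (lam j) = 1 / Fintype.card G * ∑ g : G, φ #{x : X | g • x = x} := by
    simp_rw [← hlam, mul_sum]
    rw [← ConjClasses.sum_card_carrier_smul fun j => 1 / Fintype.card G * φ (lam j)]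
    refine sum_congr rfl fun j _ => ?_
    rw [hc, nsmul_eq_mul]
    ring
  have hsum : ∑ j, c' j = 1 := by
    have burnside : ∑ g : G, (#{x : X | g • x = x} : ℝ) = Fintype.card G :=
      mod_cast MulAction.sum_card_fixedPoints_eq_card_of_isPretransitive
    simp_rw [hc', average Nat.cast, burnside]
    exact one_div_mul_cancel (by positivity)
  refine ⟨hsum, ?_⟩
  have hc_ne_zero (j) : c j ≠ 0 := by
    rw [hc]
    exact div_ne_zero (mod_cast j.card_carrier_pos.ne') (by positivity)
  calc 1 - ∑ j, c' j + ∑ j with c' j ≠ 0, c' j * Real.log (c' j / c j)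
      = ∑ j, c j * (lam j * Real.log (lam j)) := by
        rw [hsum, sub_self, zero_add, sum_filter_of_ne fun j _ => left_ne_zero_of_mul]
        refine sum_congr rfl fun j _ => ?_
        rw [hc', mul_div_cancel_left₀ _ (hc_ne_zero j), mul_assoc]
    _ = _ := by
        rw [average fun n => n * Real.log n,
          sum_filter_of_ne fun g _ h => by rintro h0; simp [h0] at h]
end

section
/- Let Y_n be the number of fixed points of a uniformly random permutation of {1,...,n}. Then for every 0 ≤ k ≤ n, |Prob(Y_n = k) − e^{−1}/k!| ≤ 2^{n+1}/(n+1)!. -/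
/-!
A permutation with exactly `k` fixed points is a choice of `k` fixed points together with a
derangement of the remaining `m = n - k` points, so the probability is `(D m / m!) / k!`.
Inclusion–exclusion makes `D m / m!` the partial sum of order `m` of `∑ (-1)^i / i! = e⁻¹`,
whose tail is at most `2 / (m + 1)!`. Finally
`k! (m + 1)! ≥ (n + 1)! / 2^n` since `C(n+1, k) ≤ 2^n`.
-/

open Finset Equiv Function
open scoped Nat

section FixedPoints

variable {α : Type*} [Fintype α] [DecidableEq α]

theorem card_perm_fixedPoints_eq (s : Finset α) :
    #{σ : Perm α | ({i | σ i = i} : Finset α) = s} =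
      numDerangements (Fintype.card α - #s) := by
  rw [← Fintype.card_subtype, ← Fintype.card_coe s, ← Fintype.card_subtype_compl,
    ← card_derangements_eq_numDerangements]
  refine Fintype.card_congr ((Equiv.subtypeEquivRight fun σ => ?_).trans
    (derangements.subtypeEquiv (· ∉ s)).symm)
  simp only [Finset.ext_iff, mem_filter, mem_univ, true_and, not_not, mem_fixedPoints, IsFixedPt]
  exact forall_congr' fun _ => Iff.comm

theorem card_perm_card_fixedPoints_eq (k : ℕ) :
    #{σ : Perm α | #{i | σ i = i} = k} =
      (Fintype.card α).choose k * numDerangements (Fintype.card α - k) := by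
  rw [card_eq_sum_card_fiberwise (f := fun σ : Perm α => ({i | σ i = i} : Finset α))
    (t := powersetCard k univ) (fun σ hσ => by simpa using (mem_filter.mp hσ).2)]
  rw [sum_congr rfl (g := fun _ => numDerangements (Fintype.card α - k)), sum_const,
    card_powersetCard, card_univ, smul_eq_mul]
  intro s hs
  have hsk : #s = k := (mem_powersetCard.mp hs).2
  rw [filter_filter, ← hsk, ← card_perm_fixedPoints_eq s]
  congr 1
  exact filter_congr fun σ _ => and_iff_right_of_imp fun h => h ▸ rfl

end FixedPoints

theorem numDerangements_div_factorial (m : ℕ) :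
    (numDerangements m : ℝ) / m ! = ∑ i ∈ range (m + 1), (-1 : ℝ) ^ i / i ! := by
  rw [← Int.cast_natCast, numDerangements_sum]
  push_cast
  rw [sum_div]
  refine sum_congr rfl fun i hi => ?_
  have him : i ≤ m := mem_range_succ_iff.mp hi
  rw [Nat.ascFactorial_eq_div, add_tsub_cancel_of_le him]
  push_cast [Nat.factorial_dvd_factorial him]
  field

theorem abs_numDerangements_div_factorial_sub_exp_neg_one_le (m : ℕ) :
    |(numDerangements m : ℝ) / (m ! : ℝ) - Real.exp (-1)| ≤ 2 / (m + 1)! := by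
  have h := Real.exp_bound (x := -1) (by norm_num) m.succ_pos
  rw [abs_sub_comm, numDerangements_div_factorial]
  refine h.trans ?_
  rw [abs_neg, abs_one, one_pow, one_mul, div_le_div_iff₀ (by positivity) (by positivity)]
  push_cast
  nlinarith [(m + 1).factorial_pos]

theorem inv_factorial_mul_factorial_le_two_pow_div {n k : ℕ} (hk : k ≤ n + 1) :
    ((k ! * (n + 1 - k)! : ℕ) : ℝ)⁻¹ ≤ 2 ^ n / (n + 1)! := by
  have hchoose : ((n + 1).choose k : ℝ) ≤ 2 ^ n := by
    exact_mod_cast Nat.choose_succ_le_two_pow n k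
  rw [Nat.cast_choose ℝ hk, div_le_iff₀ (by positivity)] at hchoose
  rw [inv_eq_one_div, div_le_div_iff₀ (by positivity) (by positivity)]
  push_cast
  linarith

theorem fixed_points_poisson_approx (n k : ℕ) (hk : k ≤ n) :
    |((Finset.univ.filter (fun σ : Equiv.Perm (Fin n) =>
          (Finset.univ.filter (fun i => σ i = i)).card = k)).card : ℝ)
        / (Nat.factorial n : ℝ)
      - Real.exp (-1) / (Nat.factorial k : ℝ)|
    ≤ 2 ^ (n + 1) / (Nat.factorial (n + 1) : ℝ) := by
  rw [card_perm_card_fixedPoints_eq, Fintype.card_fin]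
  calc _ = |((numDerangements (n - k) : ℝ) / ((n - k)! : ℝ) - Real.exp (-1)) / k !| := by
        rw [Nat.cast_mul, Nat.cast_choose ℝ hk]
        congr 1
        field
    _ = |(numDerangements (n - k) : ℝ) / ((n - k)! : ℝ) - Real.exp (-1)| / k ! := by
        rw [abs_div, Nat.abs_cast]
    _ ≤ 2 / (n - k + 1)! / k ! := by
        gcongr
        exact abs_numDerangements_div_factorial_sub_exp_neg_one_le (n - k)
    _ = 2 * ((k ! * (n + 1 - k)! : ℕ) : ℝ)⁻¹ := by
        rw [show n + 1 - k = n - k + 1 by omega]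
        push_cast
        field
    _ ≤ 2 * (2 ^ n / (n + 1)!) := by
        gcongr
        exact inv_factorial_mul_factorial_le_two_pow_div (by omega)
    _ = 2 ^ (n + 1) / (n + 1)! := by ring
end

section
/- Let J be a finite index set and c ∈ (ℝ≥0)^J. Define Λ(t) = Σ_{j∈J} c_j (e^{t_j} − 1) for t ∈ ℝ^J. Then for every y ∈ (ℝ≥0)^J with y_j = 0 whenever c_j = 0, the Legendre transform Λ*(y) = sup_{t∈ℝ^J} (⟨y,t⟩ − Λ(t)) equals Σ_{j∈J} c_j − Σ_{j: c_j≠0} y_j + Σ_{j: c_j≠0, y_j≠0} y_j · log(y_j/c_j). -/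
/-!
The supremum separates over the coordinates, so it is the sum of the one-dimensional
Legendre transforms of `s ↦ c (eˢ - 1)`. For `y > 0` this transform is attained at
`s = log (y / c)`, the upper bound being `u + 1 ≤ eᵘ` at `u = s - log (y / c)`; for `y = 0`
it equals `c`, approached as `s → -∞`.
-/

open Real Set

theorem isLUB_range_sum_pi {ι 𝕜 : Type*} [Fintype ι] [Field 𝕜] [LinearOrder 𝕜]
    [IsStrictOrderedRing 𝕜] {α : ι → Type*} {f : ∀ i, α i → 𝕜} {m : ι → 𝕜}
    (h : ∀ i, IsLUB (range (f i)) (m i)) :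
    IsLUB (range fun t : ∀ i, α i => ∑ i, f i (t i)) (∑ i, m i) := by
  refine ⟨?_, fun b hb => le_of_forall_pos_le_add fun ε hε => ?_⟩
  · rintro _ ⟨t, rfl⟩
    exact Finset.sum_le_sum fun i _ => (h i).1 ⟨t i, rfl⟩
  set δ := ε / (Fintype.card ι + 1)
  have hδ : 0 < δ := by positivity
  have near : ∀ i, ∃ s, m i - δ < f i s := fun i => by
    obtain ⟨_, ⟨s, rfl⟩, hs, -⟩ := (h i).exists_between (sub_lt_self _ hδ)
    exact ⟨s, hs⟩
  choose t ht using near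
  have hcard : Fintype.card ι * δ ≤ ε := by
    rw [mul_div_assoc', div_le_iff₀ (by positivity)]
    nlinarith
  calc ∑ i, m i = ∑ i, (m i - δ) + Fintype.card ι * δ := by
        simp [Finset.sum_sub_distrib]
    _ ≤ ∑ i, f i (t i) + ε := add_le_add (Finset.sum_le_sum fun i _ => (ht i).le) hcard
    _ ≤ b + ε := add_le_add_left (hb ⟨t, rfl⟩) ε

theorem mul_sub_mul_exp_sub_one_le {c y : ℝ} (hc : 0 < c) (hy : 0 < y) (s : ℝ) :
    y * s - c * (exp s - 1) ≤ c - y + y * log (y / c) := by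
  have hexp : y * exp (s - log (y / c)) = c * exp s := by
    rw [exp_sub, exp_log (by positivity)]
    field_simp
  have := mul_le_mul_of_nonneg_left (add_one_le_exp (s - log (y / c))) hy.le
  linarith

theorem isLUB_range_mul_sub_mul_exp_sub_one {c y : ℝ} (hc : 0 ≤ c) (hy : 0 ≤ y)
    (hyc : c = 0 → y = 0) :
    IsLUB (range fun s => y * s - c * (exp s - 1)) (c - y + y * log (y / c)) := by
  rcases hy.eq_or_lt with rfl | hy
  · have hlim : Filter.Tendsto (fun s => 0 * s - c * (exp s - 1)) Filter.atBot (nhds c) := by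
      simpa using ((tendsto_exp_atBot.sub_const 1).const_mul c).neg
    refine ⟨?_, fun b hb => ?_⟩
    · rintro _ ⟨s, rfl⟩
      nlinarith [mul_nonneg hc (exp_pos s).le]
    · simpa using le_of_tendsto' hlim fun s => hb ⟨s, rfl⟩
  have hc : 0 < c := hc.lt_of_ne' fun h => hy.ne' (hyc h)
  refine IsGreatest.isLUB ⟨⟨log (y / c), ?_⟩, ?_⟩
  · simp only [exp_log (div_pos hy hc)]
    field_simp
    ring
  · rintro _ ⟨s, rfl⟩
    exact mul_sub_mul_exp_sub_one_le hc hy s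

open scoped Classical in
theorem legendre_transform_of_poisson_cgf
    {J : Type*} [Fintype J] (c : J → ℝ) (hc : ∀ j, 0 ≤ c j)
    (y : J → ℝ) (hy : ∀ j, 0 ≤ y j) (hyc : ∀ j, c j = 0 → y j = 0) :
    (⨆ t : J → ℝ, (∑ j, y j * t j - ∑ j, c j * (Real.exp (t j) - 1)))
      = ∑ j, c j - ∑ j ∈ Finset.univ.filter (fun j => c j ≠ 0), y j
        + ∑ j ∈ Finset.univ.filter (fun j => c j ≠ 0 ∧ y j ≠ 0),
            y j * Real.log (y j / c j) := by
  have hlub := isLUB_range_sum_pi fun j =>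
    isLUB_range_mul_sub_mul_exp_sub_one (hc j) (hy j) (hyc j)
  simp only [← Finset.sum_sub_distrib]
  rw [hlub.ciSup_eq, Finset.sum_add_distrib, Finset.sum_sub_distrib,
    Finset.sum_filter_of_ne fun j _ hyj => mt (hyc j) hyj,
    Finset.sum_filter_of_ne fun j _ h => ⟨mt (hyc j) (left_ne_zero_of_mul h),
      left_ne_zero_of_mul h⟩]
end

section
/- Let r be a nonzero integer and l a nonzero integer. The number of pairs (x,y) ∈ (ℤ ∩ [1,N])² with r·y² − x² = l is O_{r,l}(log N). -/
/-!
Solutions with `y² ≥ 2|l|` have `x ≥ y/2`, and for two of them with `y₁ < y₂` the integer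
`x₂y₁ - x₁y₂` is nonzero while `(x₂y₁ - x₁y₂)(x₂y₁ + x₁y₂) = l (y₂² - y₁²)`. Hence
`y₁y₂ ≤ x₂y₁ + x₁y₂ ≤ |l| (y₂² - y₁²)`, i.e. `y₂ ≥ (1 + 1/(2|l|)) y₁`: the large solutions grow
geometrically, so at most `O(log N)` of them lie below `N`. The remaining ones have `y < 2|l|`, and
`y` determines `x`.
-/

open Finset

theorem card_le_floor_logb_add_one_of_mul_le {α : Type*} {s : Finset α} {f : α → ℝ} {q X : ℝ}
    (hq : 1 < q) (hf : Set.InjOn f s) (h1 : ∀ a ∈ s, 1 ≤ f a) (hX : ∀ a ∈ s, f a ≤ X)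
    (hgap : ∀ a ∈ s, ∀ b ∈ s, f a < f b → q * f a ≤ f b) :
    #s ≤ ⌊Real.logb q X⌋₊ + 1 := by
  set g : α → ℕ := fun a => ⌊Real.logb q (f a)⌋₊
  have g_strictMono : ∀ a ∈ s, ∀ b ∈ s, f a < f b → g a < g b := by
    intro a ha b hb hab
    have hfa : 0 < f a := by linarith [h1 a ha]
    have hlog : Real.logb q (f a) + 1 ≤ Real.logb q (f b) :=
      calc Real.logb q (f a) + 1 = Real.logb q (q * f a) := by
            rw [Real.logb_mul (by positivity) hfa.ne', Real.logb_self_eq_one hq, add_comm]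
        _ ≤ Real.logb q (f b) :=
            Real.logb_le_logb_of_le hq (by positivity) (hgap a ha b hb hab)
    calc g a < ⌊Real.logb q (f a) + 1⌋₊ := by
          rw [Nat.floor_add_one (Real.logb_nonneg hq (h1 a ha))]; exact Nat.lt_succ_self _
      _ ≤ g b := Nat.floor_le_floor hlog
  have g_injOn : Set.InjOn g s := by
    intro a ha b hb hab
    by_contra hne
    rcases lt_or_gt_of_ne (hf.ne ha hb hne) with h | h
    · exact (g_strictMono a ha b hb h).ne hab
    · exact (g_strictMono b hb a ha h).ne' hab
  have g_mapsTo : ∀ a ∈ s, g a ∈ range (⌊Real.logb q X⌋₊ + 1) := by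
    intro a ha
    rw [mem_range, Nat.lt_succ_iff]
    exact Nat.floor_le_floor (Real.logb_le_logb_of_le hq (by linarith [h1 a ha]) (hX a ha))
  simpa using card_le_card_of_injOn g g_mapsTo g_injOn

section Pell

variable {r l : ℤ}

theorem le_two_mul_of_pell (hr : r ≠ 0) {x y : ℤ} (h : r * y ^ 2 - x ^ 2 = l) (hx : 0 ≤ x)
    (hy : 2 * |l| ≤ y ^ 2) : y ≤ 2 * x := by
  have hsq : y ^ 2 ≤ (2 * x) ^ 2 := by
    rcases hr.lt_or_gt with hneg | hpos
    · nlinarith [neg_abs_le l, sq_nonneg x, sq_nonneg y]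
    · nlinarith [le_abs_self l, sq_nonneg x, sq_nonneg y]
  exact le_of_sq_le_sq hsq (by positivity)

theorem pell_gap (hr : r ≠ 0) (hl : l ≠ 0) {x₁ y₁ x₂ y₂ : ℤ}
    (h₁ : r * y₁ ^ 2 - x₁ ^ 2 = l) (h₂ : r * y₂ ^ 2 - x₂ ^ 2 = l) (hx₁ : 0 ≤ x₁) (hx₂ : 0 ≤ x₂)
    (hy₁ : 0 < y₁) (hy : y₁ < y₂) (hlarge : 2 * |l| ≤ y₁ ^ 2) :
    (2 * |l| + 1) * y₁ ≤ 2 * |l| * y₂ := by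
  have hsq : 0 < y₂ ^ 2 - y₁ ^ 2 := by nlinarith
  have hx₁y₁ := le_two_mul_of_pell hr h₁ hx₁ hlarge
  have hx₂y₂ := le_two_mul_of_pell hr h₂ hx₂ (by nlinarith)
  have key : (x₂ * y₁ - x₁ * y₂) * (x₂ * y₁ + x₁ * y₂) = l * (y₂ ^ 2 - y₁ ^ 2) := by
    linear_combination y₂ ^ 2 * h₁ - y₁ ^ 2 * h₂
  have hD : x₂ * y₁ - x₁ * y₂ ≠ 0 := by
    rintro hD
    rw [hD, zero_mul] at key
    exact mul_ne_zero hl hsq.ne' key.symm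
  have hlower : y₁ * y₂ ≤ x₂ * y₁ + x₁ * y₂ := by nlinarith
  have hpos : 0 < x₂ * y₁ + x₁ * y₂ := by nlinarith
  have hupper : x₂ * y₁ + x₁ * y₂ ≤ |l| * (y₂ ^ 2 - y₁ ^ 2) := by
    have habs := congrArg abs key
    rw [abs_mul, abs_mul, abs_of_pos hpos, abs_of_pos hsq] at habs
    nlinarith [Int.one_le_abs hD]
  nlinarith

def pellSolutions (r l : ℤ) (N : ℕ) : Finset (ℕ × ℕ) :=
  ((Icc 1 N) ×ˢ (Icc 1 N)).filter (fun xy : ℕ × ℕ => r * (xy.2 : ℤ) ^ 2 - (xy.1 : ℤ) ^ 2 = l)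

theorem mem_pellSolutions {N : ℕ} {p : ℕ × ℕ} :
    p ∈ pellSolutions r l N ↔
      (1 ≤ p.1 ∧ p.1 ≤ N) ∧ (1 ≤ p.2 ∧ p.2 ≤ N) ∧ r * (p.2 : ℤ) ^ 2 - (p.1 : ℤ) ^ 2 = l := by
  simp [pellSolutions, and_assoc]

theorem pellSolutions_injOn_snd (N : ℕ) :
    Set.InjOn Prod.snd (pellSolutions r l N : Set (ℕ × ℕ)) := by
  intro p hp p' hp' hy
  obtain ⟨-, -, hp⟩ := mem_pellSolutions.mp hp
  obtain ⟨-, -, hp'⟩ := mem_pellSolutions.mp hp'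
  rw [hy] at hp
  have hx : (p.1 : ℤ) ^ 2 = (p'.1 : ℤ) ^ 2 := by linarith
  exact Prod.ext (Nat.pow_left_injective two_ne_zero (by exact_mod_cast hx)) hy

theorem card_pellSolutions_small_le (N : ℕ) :
    #((pellSolutions r l N).filter (fun p => (p.2 : ℤ) ^ 2 < 2 * |l|)) ≤ 2 * l.natAbs := by
  have hmaps : ∀ p ∈ (pellSolutions r l N).filter (fun p => (p.2 : ℤ) ^ 2 < 2 * |l|),
      p.2 ∈ range (2 * l.natAbs) := by
    intro p hp
    obtain ⟨⟨-, ⟨hy, -⟩, -⟩, hsmall⟩ := mem_filter.mp hp |>.imp_left mem_pellSolutions.mp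
    rw [mem_range]
    zify
    nlinarith
  simpa using card_le_card_of_injOn Prod.snd hmaps
    ((pellSolutions_injOn_snd N).mono (filter_subset _ _))

theorem card_pellSolutions_large_le (hr : r ≠ 0) (hl : l ≠ 0) (N : ℕ) :
    #((pellSolutions r l N).filter (fun p => ¬ (p.2 : ℤ) ^ 2 < 2 * |l|)) ≤
      ⌊Real.logb (1 + 1 / (2 * |(l : ℝ)|)) N⌋₊ + 1 := by
  have hL : 0 < 2 * |(l : ℝ)| := by positivity
  refine card_le_floor_logb_add_one_of_mul_le (f := fun p => (p.2 : ℝ))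
    (lt_add_of_pos_right _ (by positivity))
    (fun p hp p' hp' h => pellSolutions_injOn_snd N (filter_subset _ _ hp) (filter_subset _ _ hp')
      (Nat.cast_injective (R := ℝ) h)) ?_ ?_ ?_
  · intro p hp
    obtain ⟨⟨-, ⟨hy, -⟩, -⟩, -⟩ := mem_filter.mp hp |>.imp_left mem_pellSolutions.mp
    exact_mod_cast hy
  · intro p hp
    obtain ⟨⟨-, ⟨-, hy⟩, -⟩, -⟩ := mem_filter.mp hp |>.imp_left mem_pellSolutions.mp
    exact_mod_cast hy
  · intro p hp p' hp' hlt
    obtain ⟨⟨-, ⟨hy, -⟩, h⟩, hlarge⟩ := mem_filter.mp hp |>.imp_left mem_pellSolutions.mp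
    obtain ⟨⟨-, -, h'⟩, -⟩ := mem_filter.mp hp' |>.imp_left mem_pellSolutions.mp
    have hgap := pell_gap hr hl h h' (by positivity) (by positivity) (by exact_mod_cast hy)
      (by exact_mod_cast hlt) (not_lt.mp hlarge)
    have hgapR : (2 * |(l : ℝ)| + 1) * p.2 ≤ 2 * |(l : ℝ)| * p'.2 := by exact_mod_cast hgap
    calc (1 + 1 / (2 * |(l : ℝ)|)) * p.2 = (2 * |(l : ℝ)| + 1) * p.2 / (2 * |(l : ℝ)|) := by
          field_simp
      _ ≤ p'.2 := by rw [div_le_iff₀ hL]; linarith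

theorem card_pellSolutions_le (hr : r ≠ 0) (hl : l ≠ 0) (N : ℕ) :
    (#(pellSolutions r l N) : ℝ) ≤
      2 * |(l : ℝ)| + 1 + Real.logb (1 + 1 / (2 * |(l : ℝ)|)) N := by
  rw [← card_filter_add_card_filter_not (fun p => (p.2 : ℤ) ^ 2 < 2 * |l|)]
  have hsmall : (#((pellSolutions r l N).filter (fun p => (p.2 : ℤ) ^ 2 < 2 * |l|)) : ℝ) ≤
      2 * |(l : ℝ)| := by
    calc _ ≤ ((2 * l.natAbs : ℕ) : ℝ) := Nat.cast_le.mpr (card_pellSolutions_small_le N)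
      _ = 2 * |(l : ℝ)| := by push_cast [Nat.cast_natAbs]; rfl
  have hq : 1 < 1 + 1 / (2 * |(l : ℝ)|) := lt_add_of_pos_right _ (by positivity)
  have hlarge := Nat.cast_le (α := ℝ) |>.mpr (card_pellSolutions_large_le hr hl N)
  have hlogb : 0 ≤ Real.logb (1 + 1 / (2 * |(l : ℝ)|)) N :=
    div_nonneg (Real.log_natCast_nonneg N) (Real.log_nonneg hq.le)
  have hfloor := Nat.floor_le hlogb
  push_cast at hlarge ⊢
  linarith

end Pell

theorem estermann_pell_type_count (r l : ℤ) (hr : r ≠ 0) (hl : l ≠ 0) :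
    ∃ C : ℝ, ∀ N : ℕ, 2 ≤ N →
      ((((Finset.Icc 1 N) ×ˢ (Finset.Icc 1 N)).filter
          (fun xy : ℕ × ℕ => r * (xy.2 : ℤ) ^ 2 - (xy.1 : ℤ) ^ 2 = l)).card : ℝ)
        ≤ C * Real.log N := by
  set q : ℝ := 1 + 1 / (2 * |(l : ℝ)|)
  have hq : 1 < q := lt_add_of_pos_right _ (by positivity)
  refine ⟨(2 * |(l : ℝ)| + 1) / Real.log 2 + 1 / Real.log q, fun N hN => ?_⟩
  have hlog2 : 0 < Real.log 2 := Real.log_pos one_lt_two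
  have hlogN : Real.log 2 ≤ Real.log N := Real.log_le_log two_pos (by exact_mod_cast hN)
  calc _ ≤ 2 * |(l : ℝ)| + 1 + Real.logb q N := card_pellSolutions_le hr hl N
    _ ≤ (2 * |(l : ℝ)| + 1) / Real.log 2 * Real.log N + 1 / Real.log q * Real.log N := by
        have hsmall : 2 * |(l : ℝ)| + 1 ≤ (2 * |(l : ℝ)| + 1) / Real.log 2 * Real.log N := by
          rw [div_mul_eq_mul_div, le_div_iff₀ hlog2]
          nlinarith [abs_nonneg (l : ℝ)]
        have hlogb : Real.logb q N = 1 / Real.log q * Real.log N := by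
          rw [Real.logb]
          ring
        linarith
    _ = _ := by ring
end
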